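/- Let X ∈ ℝ^{n×d}, let x be a random vector in ℝ^d with E[x x^T] = Σ, and let α ≥ 0, β > 0, γ > 0. Then E ‖ (γI + α 1 1^T + β XX^T/d)^{−1} (β X x/d) ‖² ≤ (‖Σ‖_op/d) · Σ_j λ_j(XX^T/d + (α/β) 1 1^T) / [ γ/β + λ_j(XX^T/d + (α/β) 1 1^T) ]². -/

import Mathlib

/-!
Put `A = XXᵀ/d + (α/β)11ᵀ` and `N = (γ/β)I + A`. The matrix being inverted is `βN`, so the random
vector is `Bx` with `B = N⁻¹X/d`. Then `E‖Bx‖² = tr(BΣBᵀ) ≤ ‖Σ‖ tr(BBᵀ) = (‖Σ‖/d) tr(N⁻¹(XXᵀ/d)N⁻¹)`,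
and since `(α/β)11ᵀ` is positive semidefinite this is at most `(‖Σ‖/d) tr(N⁻¹AN⁻¹)`. Through the
functional calculus of `A`, `N⁻¹AN⁻¹ = f(A)` with `f t = t/(γ/β + t)²`, whose trace is `∑ f(λⱼ)`.
-/

open MeasureTheory Matrix Finset

/-- Eigenvalues of a real symmetric matrix listed in decreasing order
(junk value `0` if the matrix is not symmetric). -/
noncomputable def descEig {n : ℕ} (A : Matrix (Fin n) (Fin n) ℝ) : Fin n → ℝ :=
  if hA : A.IsHermitian then
    fun j => (hA.eigenvalues ∘ Tuple.sort hA.eigenvalues) j.rev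
  else 0

/-- Operator (spectral) norm of a real matrix. -/
noncomputable def opNorm {m n : ℕ} (A : Matrix (Fin m) (Fin n) ℝ) : ℝ :=
  ‖LinearMap.toContinuousLinearMap (Matrix.toEuclideanLin A)‖

lemma sum_descEig_eq {n : ℕ} {A : Matrix (Fin n) (Fin n) ℝ} (hA : A.IsHermitian) (f : ℝ → ℝ) :
    ∑ j, f (descEig A j) = ∑ j, f (hA.eigenvalues j) := by
  simp only [descEig, dif_pos hA]
  exact Equiv.sum_comp (Fin.revPerm.trans (Tuple.sort hA.eigenvalues)) (f ∘ hA.eigenvalues)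

lemma dotProduct_mulVec_le_opNorm_mul {d : ℕ} (S : Matrix (Fin d) (Fin d) ℝ) (v : Fin d → ℝ) :
    v ⬝ᵥ S *ᵥ v ≤ opNorm S * (v ⬝ᵥ v) := by
  set w : EuclideanSpace ℝ (Fin d) := WithLp.toLp 2 v
  have hw : v ⬝ᵥ v = ‖w‖ ^ 2 := by
    rw [← real_inner_self_eq_norm_sq, EuclideanSpace.inner_eq_star_dotProduct]; rfl
  have hSw : v ⬝ᵥ S *ᵥ v = inner ℝ w (toEuclideanLin S w) := by
    rw [EuclideanSpace.inner_eq_star_dotProduct, dotProduct_comm]; rfl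
  have hle : ‖toEuclideanLin S w‖ ≤ opNorm S * ‖w‖ :=
    (LinearMap.toContinuousLinearMap (toEuclideanLin S)).le_opNorm w
  calc v ⬝ᵥ S *ᵥ v ≤ ‖w‖ * ‖toEuclideanLin S w‖ := hSw ▸ real_inner_le_norm _ _
    _ ≤ ‖w‖ * (opNorm S * ‖w‖) := by gcongr
    _ = opNorm S * (v ⬝ᵥ v) := by rw [hw]; ring

lemma trace_mul_mul_transpose_le_opNorm_mul {ι : Type*} [Fintype ι] {d : ℕ}
    (B : Matrix ι (Fin d) ℝ) (S : Matrix (Fin d) (Fin d) ℝ) :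
    (B * S * Bᵀ).trace ≤ opNorm S * (B * Bᵀ).trace := by
  simp only [trace, Matrix.diag, mul_sum]
  refine sum_le_sum fun i _ => ?_
  have hBSB : (B * S * Bᵀ) i i = B i ⬝ᵥ S *ᵥ B i := by
    rw [dotProduct_mulVec, mul_apply]; rfl
  have hBB : (B * Bᵀ) i i = B i ⬝ᵥ B i := rfl
  rw [hBSB, hBB]
  exact dotProduct_mulVec_le_opNorm_mul S (B i)

lemma integral_sum_mulVec_sq {ι κ : Type*} [Fintype ι] [Fintype κ] (B : Matrix ι κ ℝ)
    (μ : Measure (κ → ℝ)) (S : Matrix κ κ ℝ)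
    (hint : ∀ i j, Integrable (fun x : κ → ℝ => x i * x j) μ)
    (hcov : ∀ i j, ∫ x, x i * x j ∂μ = S i j) :
    ∫ x, ∑ i, (B *ᵥ x) i ^ 2 ∂μ = (B * S * Bᵀ).trace := by
  have hexpand (x : κ → ℝ) :
      ∑ i, (B *ᵥ x) i ^ 2 = ∑ i, ∑ j, ∑ k, B i j * B i k * (x j * x k) := by
    refine sum_congr rfl fun i _ => ?_
    rw [mulVec, dotProduct, sq, sum_mul_sum]
    exact sum_congr rfl fun j _ => sum_congr rfl fun k _ => by ring
  have hint' (i : ι) (j : κ) :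
      Integrable (fun x : κ → ℝ => ∑ k, B i j * B i k * (x j * x k)) μ :=
    integrable_finsetSum _ fun k _ => (hint j k).const_mul _
  simp only [hexpand]
  rw [integral_finsetSum _ fun i _ => integrable_finsetSum _ fun j _ => hint' i j]
  simp only [integral_finsetSum _ fun j _ => hint' _ j,
    integral_finsetSum _ fun k _ => (hint _ k).const_mul _, integral_const_mul, hcov]
  simp only [trace, Matrix.diag, mul_apply, transpose_apply, sum_mul]
  refine sum_congr rfl fun i _ => ?_
  rw [sum_comm]
  exact sum_congr rfl fun j _ => sum_congr rfl fun k _ => by ring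

lemma inv_smul_mulVec_smul_mulVec {ι κ : Type*} [Fintype ι] [DecidableEq ι] [Fintype κ]
    {N : Matrix ι ι ℝ} (hN : IsUnit N.det) {β : ℝ} (hβ : β ≠ 0) (δ : ℝ) (X : Matrix ι κ ℝ)
    (x : κ → ℝ) : (β • N)⁻¹ *ᵥ ((β / δ) • X *ᵥ x) = (δ⁻¹ • (N⁻¹ * X)) *ᵥ x := by
  rw [← Units.smul_mk0 hβ, inv_smul' N _ hN, Units.smul_def, smul_mulVec, smul_mulVec,
    mulVec_smul, ← mulVec_mulVec, smul_smul, Units.val_inv_eq_inv_val, Units.val_mk0,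
    inv_mul_eq_div, div_div_cancel_left' hβ]

lemma trace_smul_mul_mul_transpose {ι κ : Type*} [Fintype ι] [Fintype κ] (c : ℝ)
    (M : Matrix ι ι ℝ) (X : Matrix ι κ ℝ) :
    ((c • (M * X)) * (c • (M * X))ᵀ).trace = c * (M * (c • (X * Xᵀ)) * Mᵀ).trace := by
  simp only [transpose_smul, transpose_mul, Matrix.smul_mul, Matrix.mul_smul, smul_smul,
    trace_smul, Matrix.mul_assoc, smul_eq_mul]
  ring

lemma trace_mul_mul_transpose_mono {ι κ : Type*} [Fintype ι] [Fintype κ]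
    {P Q : Matrix κ κ ℝ} (hPQ : (Q - P).PosSemidef) (M : Matrix ι κ ℝ) :
    (M * P * Mᵀ).trace ≤ (M * Q * Mᵀ).trace := by
  have h := (hPQ.mul_mul_conjTranspose_same M).trace_nonneg
  rw [conjTranspose_eq_transpose_of_trivial, Matrix.mul_sub, Matrix.sub_mul, trace_sub] at h
  linarith

lemma posSemidef_of_fun_one {R ι : Type*} [CommRing R] [PartialOrder R] [StarRing R]
    [StarOrderedRing R] [Fintype ι] : (of fun _ _ => (1 : R) : Matrix ι ι R).PosSemidef := by
  convert posSemidef_vecMulVec_self_star (fun _ : ι => (1 : R)) using 1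
  ext; simp [vecMulVec]

namespace Matrix.IsHermitian

variable {ι : Type*} [Fintype ι] [DecidableEq ι] {A : Matrix ι ι ℝ} (hA : A.IsHermitian)
include hA

lemma trace_cfc_eq_sum (f : ℝ → ℝ) : (cfc f A).trace = ∑ i, f (hA.eigenvalues i) := by
  rw [hA.cfc_eq, IsHermitian.cfc, Unitary.conjStarAlgAut_apply, trace_mul_cycle,
    Unitary.coe_star_mul_self, one_mul, trace_diagonal]
  rfl

lemma smul_one_add_eq_cfc (c : ℝ) : c • 1 + A = cfc (fun t => c + t) A := by
  have hsa : IsSelfAdjoint A := hA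
  rw [cfc_const_add c (fun t => t) A, cfc_id' ℝ A, Algebra.algebraMap_eq_smul_one]

lemma inv_smul_one_add_eq_cfc {c : ℝ} (hc : ∀ i, c + hA.eigenvalues i ≠ 0) :
    (c • 1 + A)⁻¹ = cfc (fun t => (c + t)⁻¹) A := by
  have hsa : IsSelfAdjoint A := hA
  have hcont (f : ℝ → ℝ) : ContinuousOn f (spectrum ℝ A) :=
    (finite_real_spectrum (A := A)).continuousOn f
  refine inv_eq_right_inv ?_
  rw [hA.smul_one_add_eq_cfc, ← cfc_mul _ _ A (hcont _) (hcont _), ← cfc_const_one ℝ A]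
  refine cfc_congr fun t ht => ?_
  rw [hA.spectrum_real_eq_range_eigenvalues] at ht
  obtain ⟨i, rfl⟩ := ht
  exact mul_inv_cancel₀ (hc i)

lemma trace_inv_mul_mul_inv {c : ℝ} (hc : ∀ i, c + hA.eigenvalues i ≠ 0) :
    ((c • 1 + A)⁻¹ * A * (c • 1 + A)⁻¹).trace =
      ∑ i, hA.eigenvalues i / (c + hA.eigenvalues i) ^ 2 := by
  have hsa : IsSelfAdjoint A := hA
  have hcont (f : ℝ → ℝ) : ContinuousOn f (spectrum ℝ A) :=
    (finite_real_spectrum (A := A)).continuousOn f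
  rw [hA.inv_smul_one_add_eq_cfc hc]
  nth_rewrite 2 [← cfc_id' ℝ A]
  rw [← cfc_mul _ _ A (hcont _) (hcont _), ← cfc_mul _ _ A (hcont _) (hcont _),
    hA.trace_cfc_eq_sum]
  congr 1 with i
  rw [div_eq_mul_inv, ← inv_pow]
  ring

end Matrix.IsHermitian

theorem stmt_12_general (n d : ℕ) (X : Matrix (Fin n) (Fin d) ℝ)
    (μ : Measure (Fin d → ℝ))
    (S : Matrix (Fin d) (Fin d) ℝ)
    (hint : ∀ i j, Integrable (fun x : Fin d → ℝ => x i * x j) μ)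
    (hcov : ∀ i j, (∫ x, x i * x j ∂μ) = S i j)
    (α β γ : ℝ) (hα : 0 ≤ α) (hβ : 0 < β) (hγ : 0 < γ) :
    (∫ x, (∑ i : Fin n,
        ((γ • (1 : Matrix (Fin n) (Fin n) ℝ) + α • (Matrix.of fun _ _ => (1 : ℝ)) +
          (β / d) • (X * Xᵀ))⁻¹).mulVec ((β / d) • X.mulVec x) i ^ 2) ∂μ)
      ≤ (opNorm S / d) *
        ∑ j : Fin n,
          descEig ((d : ℝ)⁻¹ • (X * Xᵀ) + (α / β) • (Matrix.of fun _ _ => (1 : ℝ))) j /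
            (γ / β +
              descEig ((d : ℝ)⁻¹ • (X * Xᵀ) + (α / β) • (Matrix.of fun _ _ => (1 : ℝ))) j) ^ 2 := by
  set J : Matrix (Fin n) (Fin n) ℝ := of fun _ _ => 1
  set G : Matrix (Fin n) (Fin n) ℝ := (d : ℝ)⁻¹ • (X * Xᵀ)
  set A := G + (α / β) • J with hA_def
  have hJ : ((α / β) • J).PosSemidef := posSemidef_of_fun_one.smul (by positivity)
  have hApsd : A.PosSemidef := by
    refine .add (.smul ?_ (by positivity)) hJ
    simpa using posSemidef_self_mul_conjTranspose X
  set N := (γ / β) • (1 : Matrix (Fin n) (Fin n) ℝ) + A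
  have hNpd : N.PosDef := (PosDef.one.smul (div_pos hγ hβ)).add_posSemidef hApsd
  have hMN : γ • 1 + α • J + (β / d) • (X * Xᵀ) = β • N := by
    rw [smul_add, smul_add, smul_smul, smul_smul, smul_smul, mul_div_cancel₀ _ hβ.ne',
      mul_div_cancel₀ _ hβ.ne', ← div_eq_mul_inv]
    abel
  have hc (i : Fin n) : γ / β + hApsd.isHermitian.eigenvalues i ≠ 0 :=
    (add_pos_of_pos_of_nonneg (div_pos hγ hβ) (hApsd.eigenvalues_nonneg i)).ne'
  set B := (d : ℝ)⁻¹ • (N⁻¹ * X)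
  calc _ = ∫ x, ∑ i, (B *ᵥ x) i ^ 2 ∂μ := by
        simp only [hMN, B,
          inv_smul_mulVec_smul_mulVec ((isUnit_iff_isUnit_det N).mp hNpd.isUnit) hβ.ne']
    _ = (B * S * Bᵀ).trace := integral_sum_mulVec_sq B μ S hint hcov
    _ ≤ opNorm S * (B * Bᵀ).trace := trace_mul_mul_transpose_le_opNorm_mul B S
    _ = opNorm S / d * (N⁻¹ * G * N⁻¹ᵀ).trace := by
      rw [trace_smul_mul_mul_transpose]; ring
    _ ≤ opNorm S / d * (N⁻¹ * A * N⁻¹ᵀ).trace := by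
      gcongr
      · exact div_nonneg (norm_nonneg _) d.cast_nonneg
      · exact trace_mul_mul_transpose_mono (by simpa [hA_def] using hJ) _
    _ = _ := by
      rw [transpose_nonsing_inv, ← conjTranspose_eq_transpose_of_trivial, hNpd.isHermitian.eq,
        hApsd.isHermitian.trace_inv_mul_mul_inv hc,
        sum_descEig_eq hApsd.isHermitian (fun t => t / (γ / β + t) ^ 2)]

/-- for `X ∈ ℝ^{n×d}`, a random vector `x` with `E[xxᵀ] = Σ`,
and `α ≥ 0`, `β > 0`, `γ > 0`,
`E ‖(γI + α11ᵀ + βXXᵀ/d)⁻¹ (βXx/d)‖² ≤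
  (‖Σ‖_op/d) Σ_j λ_j(XXᵀ/d + (α/β)11ᵀ) / [γ/β + λ_j(XXᵀ/d + (α/β)11ᵀ)]²`. -/
theorem stmt_12 (n d : ℕ) (hd : 0 < d) (X : Matrix (Fin n) (Fin d) ℝ)
    (μ : Measure (Fin d → ℝ)) [IsProbabilityMeasure μ]
    (S : Matrix (Fin d) (Fin d) ℝ)
    (hint : ∀ i j, Integrable (fun x : Fin d → ℝ => x i * x j) μ)
    (hcov : ∀ i j, (∫ x, x i * x j ∂μ) = S i j)
    (α β γ : ℝ) (hα : 0 ≤ α) (hβ : 0 < β) (hγ : 0 < γ) :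
    (∫ x, (∑ i : Fin n,
        ((γ • (1 : Matrix (Fin n) (Fin n) ℝ) + α • (Matrix.of fun _ _ => (1 : ℝ)) +
          (β / d) • (X * Xᵀ))⁻¹).mulVec ((β / d) • X.mulVec x) i ^ 2) ∂μ)
      ≤ (opNorm S / d) *
        ∑ j : Fin n,
          descEig ((d : ℝ)⁻¹ • (X * Xᵀ) + (α / β) • (Matrix.of fun _ _ => (1 : ℝ))) j /
            (γ / β +
              descEig ((d : ℝ)⁻¹ • (X * Xᵀ) + (α / β) • (Matrix.of fun _ _ => (1 : ℝ))) j) ^ 2 :=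
  stmt_12_general n d X μ S hint hcov α β γ hα hβ hγ
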